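/- For every b ∈ {0,1,…,n}, c_b = (1/(n+1)) · ∑_{t=0}^{n} C_t · e^{2πi t b/(n+1)}, where i = √−1 and C_t = ∏_{j=1}^n [1 + (α_j/β_j) + e^{−2πi t/(n+1)} · (α_j u_j/(β_j v_j))]. Consequently, if the mass function p sums to 1 over all legitimate extended states, then B = 1 / ( ∑_{b=0}^{g} ∑_{x=0}^{m−b} (ρ^x/x!) (∏_{r=0}^{x+b−1} θ(r)) c_b ) with g = min(m,n). -/

import Mathlib

/-- Activity state of a persistent user: Idle, Waiting, or Transmitting. -/
inductive Act : Type
  | I : Act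
  | W : Act
  | T : Act
deriving DecidableEq

instance : Fintype Act :=
  ⟨{Act.I, Act.W, Act.T}, fun x => by cases x <;> simp⟩

/-- Number of persistent users that are transmitting. -/
def busyP {n : ℕ} (a : Fin n → Act) : ℕ :=
  (Finset.univ.filter (fun j => a j = Act.T)).card

/-- The factor `(α/β)^{[a=W]} (αu/(βv))^{[a=T]}` contributed by one persistent user. -/
noncomputable def fac (α β u v : ℝ) : Act → ℝ
  | Act.I => 1
  | Act.W => α / β
  | Act.T => α * u / (β * v)

/-!
With `ω = e^{2πi/(n+1)}`, expanding the product defining `C_t` over the users (each contributes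
`1`, `α/β` or `ω^{-t} αu/(βv)` according to its state) gives `C_t = ∑_b c_b ω^{-tb}`: the `C_t` are
the discrete Fourier transform of `(c_0, …, c_n)`, which orthogonality of the `(n+1)`-st roots of
unity inverts. For the normalizing constant, the multinomial theorem collapses the sum over the
`x` with `∑ xᵢ = s` to `ρ^s/s!`, and grouping the persistent states by their number `b` of
transmitting users produces `c_b`; only `b ≤ min m n` contributes, since otherwise no `x` is
legitimate.
-/

open Finset Complex

theorem IsPrimitiveRoot.sum_range_pow_mul_inv_pow {K : Type*} [Field K] {ζ : K} {N : ℕ}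
    (hζ : IsPrimitiveRoot ζ N) {b d : ℕ} (hb : b < N) (hd : d < N) :
    ∑ t ∈ range N, ζ ^ (t * b) * ζ⁻¹ ^ (t * d) = if b = d then (N : K) else 0 := by
  have hζ0 : ζ ≠ 0 := hζ.ne_zero (by omega)
  set η := ζ ^ b * ζ⁻¹ ^ d
  have hpow : ∀ t, ζ ^ (t * b) * ζ⁻¹ ^ (t * d) = η ^ t := fun t => by
    rw [mul_pow, ← pow_mul, ← pow_mul, mul_comm b, mul_comm d]
  simp_rw [hpow]
  split_ifs with hbd
  · subst hbd
    simp [η, hζ0]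
  · have hη1 : η ≠ 1 := fun h =>
      hbd (hζ.pow_inj hb hd ((mul_inv_eq_one₀ (pow_ne_zero _ hζ0)).1 (by rwa [← inv_pow])))
    have hηN : η ^ N = 1 := by
      rw [← hpow, pow_mul, pow_mul, hζ.pow_eq_one, hζ.inv.pow_eq_one, one_pow, one_pow, one_mul]
    rw [geom_sum_eq hη1, hηN, sub_self, zero_div]

theorem IsPrimitiveRoot.sum_range_dft_mul_pow {K : Type*} [Field K] {ζ : K} {N : ℕ}
    (hζ : IsPrimitiveRoot ζ N) (c : ℕ → K) {b : ℕ} (hb : b < N) :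
    ∑ t ∈ range N, (∑ d ∈ range N, c d * ζ⁻¹ ^ (t * d)) * ζ ^ (t * b) = N * c b := by
  calc ∑ t ∈ range N, (∑ d ∈ range N, c d * ζ⁻¹ ^ (t * d)) * ζ ^ (t * b)
      = ∑ d ∈ range N, c d * ∑ t ∈ range N, ζ ^ (t * b) * ζ⁻¹ ^ (t * d) := by
        simp_rw [sum_mul, mul_sum]
        rw [sum_comm]
        exact sum_congr rfl fun _ _ => sum_congr rfl fun _ _ => by ring
    _ = ∑ d ∈ range N, c d * if b = d then (N : K) else 0 :=
        sum_congr rfl fun d hd => by rw [hζ.sum_range_pow_mul_inv_pow hb (mem_range.1 hd)]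
    _ = N * c b := by simp [hb, mul_comm]

theorem Nat.sum_antidiagonalTuple_prod_pow_div_factorial {K : Type*} [Field K] [CharZero K]
    (k s : ℕ) (ρ : Fin k → K) :
    ∑ x ∈ Nat.antidiagonalTuple k s, ∏ i, ρ i ^ x i / (x i).factorial
      = (∑ i, ρ i) ^ s / s.factorial := by
  rw [← piAntidiag_univ_fin_eq_antidiagonalTuple, sum_pow_eq_sum_piAntidiag, sum_div]
  refine sum_congr rfl fun x hx => ?_
  have hspec : ((∏ i, (x i).factorial : ℕ) : K) * Nat.multinomial univ x = s.factorial := by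
    rw [← (mem_piAntidiag.1 hx).1]
    exact_mod_cast Nat.multinomial_spec univ x
  rw [prod_div_distrib, div_eq_div_iff
    (prod_ne_zero_iff.2 fun i _ => Nat.cast_ne_zero.2 (Nat.factorial_ne_zero _))
    (Nat.cast_ne_zero.2 (Nat.factorial_ne_zero _)), ← hspec]
  push_cast
  ring

theorem Act.sum_univ {M : Type*} [AddCommMonoid M] (f : Act → M) :
    ∑ s : Act, f s = f Act.I + f Act.W + f Act.T := by
  rw [show (univ : Finset Act) = {Act.I, Act.W, Act.T} by decide, sum_insert (by decide),
    sum_insert (by decide), sum_singleton, add_assoc]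

theorem busyP_le {n : ℕ} (a : Fin n → Act) : busyP a ≤ n :=
  (card_filter_le _ _).trans_eq (card_fin n)

theorem prod_add_add_mul_eq_sum_pow_busyP {R : Type*} [CommSemiring R] {n : ℕ}
    (f : Fin n → Act → R) (w : R) :
    ∏ j, (f j Act.I + f j Act.W + w * f j Act.T)
      = ∑ a : Fin n → Act, w ^ busyP a * ∏ j, f j (a j) := by
  have hfactor : ∀ j, f j Act.I + f j Act.W + w * f j Act.T
      = ∑ s : Act, w ^ (if s = Act.T then 1 else 0) * f j s := fun j => by
    simp [Act.sum_univ]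
  simp_rw [hfactor, prod_univ_sum, Fintype.piFinset_univ, prod_mul_distrib, prod_pow_eq_pow_sum,
    busyP, card_filter]

theorem sum_mul_busyP_eq_sum_range {R : Type*} [CommSemiring R] {n : ℕ} (g : ℕ → R)
    (F : (Fin n → Act) → R) :
    ∑ a, g (busyP a) * F a = ∑ b ∈ range (n + 1), g b * ∑ a with busyP a = b, F a := by
  rw [← sum_fiberwise_of_maps_to (g := busyP) (t := range (n + 1))
    fun a _ => mem_range.2 (Nat.lt_succ_of_le (busyP_le a))]
  refine sum_congr rfl fun b _ => ?_
  rw [mul_sum]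
  exact sum_congr rfl fun a ha => by rw [(mem_filter.1 ha).2]

theorem prod_one_add_add_mul_eq_sum_range {n : ℕ} (α β u v : Fin n → ℝ) (w : ℂ) :
    ∏ j, (1 + ((α j / β j : ℝ) : ℂ) + w * ((α j * u j / (β j * v j) : ℝ) : ℂ))
      = ∑ b ∈ range (n + 1), w ^ b *
          ((∑ a with busyP a = b, ∏ j, fac (α j) (β j) (u j) (v j) (a j) : ℝ) : ℂ) := by
  have h := prod_add_add_mul_eq_sum_pow_busyP (fun j s => (fac (α j) (β j) (u j) (v j) s : ℂ)) w
  simp only [fac, ofReal_one] at h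
  rw [h, sum_mul_busyP_eq_sum_range (fun b => w ^ b)]
  push_cast
  rfl

theorem sum_range_sum_range_sub_eq_sum_range_min {M : Type*} [AddCommMonoid M] (m n : ℕ)
    (h : ℕ → ℕ → M) :
    ∑ b ∈ range (n + 1), ∑ s ∈ range (m + 1 - b), h b s
      = ∑ b ∈ range (min m n + 1), ∑ s ∈ range (m - b + 1), h b s := by
  rw [← sum_subset (range_subset_range.2 (by omega : min m n + 1 ≤ n + 1))]
  · exact sum_congr rfl fun b hb => by
      rw [show m + 1 - b = m - b + 1 by have := mem_range.1 hb; omega]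
  · intro b hb hb'
    rw [show m + 1 - b = 0 by simp only [mem_range] at hb hb'; omega, range_zero, sum_empty]

theorem sum_legitimate_mass_eq (m k n : ℕ) (θ : ℕ → ℝ) (ρ : Fin k → ℝ)
    (F : (Fin n → Act) → ℝ) :
    ∑ a : Fin n → Act, ∑ s ∈ range (m + 1 - busyP a), ∑ x ∈ Nat.antidiagonalTuple k s,
        (∏ r ∈ range (∑ i, x i + busyP a), θ r) * (∏ i, ρ i ^ x i / (x i).factorial) * F a
      = ∑ b ∈ range (min m n + 1), ∑ s ∈ range (m - b + 1),
          (∑ i, ρ i) ^ s / s.factorial * (∏ r ∈ range (s + b), θ r) *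
            ∑ a with busyP a = b, F a := by
  set G : ℕ → ℕ → ℝ := fun b s => (∑ i, ρ i) ^ s / s.factorial * ∏ r ∈ range (s + b), θ r
  calc _ = ∑ a, (∑ s ∈ range (m + 1 - busyP a), G (busyP a) s) * F a := by
        refine sum_congr rfl fun a _ => ?_
        rw [sum_mul]
        refine sum_congr rfl fun s _ => ?_
        rw [← sum_mul, sum_congr rfl fun x hx => by rw [Nat.mem_antidiagonalTuple.1 hx],
          ← mul_sum, Nat.sum_antidiagonalTuple_prod_pow_div_factorial]
        ring
    _ = ∑ b ∈ range (n + 1), ∑ s ∈ range (m + 1 - b), G b s * ∑ a with busyP a = b, F a := by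
        simp_rw [sum_mul_busyP_eq_sum_range (fun b => ∑ s ∈ range (m + 1 - b), G b s), sum_mul]
    _ = _ := sum_range_sum_range_sub_eq_sum_range_min m n _

theorem inverse_dft_cb_and_normalizing_constant_general
    (m k n : ℕ)
    (θ : ℕ → ℝ)
    (α β u v : Fin n → ℝ)
    (ρ : Fin k → ℝ)
    (B : ℝ)
    (p : (Fin k → ℕ) → (Fin n → Act) → ℝ)
    (hp : ∀ (x : Fin k → ℕ) (a : Fin n → Act),
      p x a = B * (∏ r ∈ Finset.range (∑ i, x i + busyP a), θ r) *
        (∏ i, ρ i ^ (x i) / (x i).factorial) *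
        ∏ j, fac (α j) (β j) (u j) (v j) (a j))
    (c : ℕ → ℝ)
    (hc : ∀ b, c b = ∑ a ∈ Finset.univ.filter (fun a : Fin n → Act => busyP a = b),
      ∏ j, fac (α j) (β j) (u j) (v j) (a j))
    (C : ℕ → ℂ)
    (hC : ∀ t, C t = ∏ j,
      (1 + ((α j / β j : ℝ) : ℂ) +
        Complex.exp (-2 * (Real.pi : ℂ) * Complex.I * t / (n + 1)) *
          ((α j * u j / (β j * v j) : ℝ) : ℂ))) :
    (∀ b ≤ n, (c b : ℂ) = (1 / (n + 1)) * ∑ t ∈ Finset.range (n + 1),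
        C t * Complex.exp (2 * (Real.pi : ℂ) * Complex.I * t * b / (n + 1))) ∧
      ((∑ a : Fin n → Act, ∑ xt ∈ Finset.range (m + 1 - busyP a),
          ∑ x ∈ Finset.Nat.antidiagonalTuple k xt, p x a) = 1 →
        B = 1 / (∑ b ∈ Finset.range (min m n + 1), ∑ xt ∈ Finset.range (m - b + 1),
          (∑ i, ρ i) ^ xt / xt.factorial * (∏ r ∈ Finset.range (xt + b), θ r) * c b)) := by
  constructor
  · intro b hb
    have hζ := Complex.isPrimitiveRoot_exp (n + 1) n.succ_ne_zero
    set ζ := exp (2 * Real.pi * I / ↑(n + 1))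
    have hdft : ∀ t : ℕ, C t = ∑ d ∈ range (n + 1), (c d : ℂ) * ζ⁻¹ ^ (t * d) := fun t => by
      rw [hC, show exp (-2 * Real.pi * I * t / (n + 1)) = ζ⁻¹ ^ t by
        rw [← exp_neg, ← exp_nat_mul]; push_cast; ring_nf, prod_one_add_add_mul_eq_sum_range]
      exact sum_congr rfl fun d _ => by rw [hc, pow_mul, mul_comm]
    have hexp : ∀ t : ℕ, exp (2 * Real.pi * I * t * b / (n + 1)) = ζ ^ (t * b) := fun t => by
      rw [← exp_nat_mul]; push_cast; ring_nf
    simp_rw [hdft, hexp]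
    rw [hζ.sum_range_dft_mul_pow _ (Nat.lt_succ_of_le hb)]
    push_cast
    field_simp
  · intro hsum
    simp_rw [hp, mul_assoc, ← mul_sum, ← mul_assoc] at hsum
    rw [sum_legitimate_mass_eq] at hsum
    simp_rw [← hc] at hsum
    exact eq_one_div_of_mul_eq_one_left hsum

/-- the coefficients `c_b` are recovered from the DFT values
`C_t = ∏_j [1 + α_j/β_j + e^{-2πit/(n+1)} α_j u_j/(β_j v_j)]` by the inverse discrete
Fourier transform; consequently, if the mass function sums to one over legitimate
states, the normalizing constant is `B = 1/(∑_{b=0}^g ∑_{x=0}^{m-b} (ρ^x/x!)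
(∏_{r=0}^{x+b-1} θ(r)) c_b)` with `g = min m n`. -/
theorem inverse_dft_cb_and_normalizing_constant
    (m k n : ℕ) (hm : 0 < m) (hk : 0 < k) (hn : 0 < n)
    (θ : ℕ → ℝ)
    (hθ1 : ∀ b ≤ m, 0 ≤ θ b ∧ θ b ≤ 1)
    (hθ2 : ∀ b < m, 0 < θ b)
    (hθ3 : θ m = 0)
    (lam μ : Fin k → ℝ) (hlam : ∀ i, 0 < lam i) (hμ : ∀ i, 0 < μ i)
    (α β u v : Fin n → ℝ)
    (hα : ∀ j, 0 < α j) (hβ : ∀ j, 0 < β j) (hu : ∀ j, 0 < u j) (hv : ∀ j, 0 < v j)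
    (ρ : Fin k → ℝ) (hρ : ∀ i, ρ i = lam i / μ i)
    (B : ℝ) (hB : 0 < B)
    (p : (Fin k → ℕ) → (Fin n → Act) → ℝ)
    (hp : ∀ (x : Fin k → ℕ) (a : Fin n → Act),
      p x a = B * (∏ r ∈ Finset.range (∑ i, x i + busyP a), θ r) *
        (∏ i, ρ i ^ (x i) / (x i).factorial) *
        ∏ j, fac (α j) (β j) (u j) (v j) (a j))
    (c : ℕ → ℝ)
    (hc : ∀ b, c b = ∑ a ∈ Finset.univ.filter (fun a : Fin n → Act => busyP a = b),
      ∏ j, fac (α j) (β j) (u j) (v j) (a j))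
    (C : ℕ → ℂ)
    (hC : ∀ t, C t = ∏ j,
      (1 + ((α j / β j : ℝ) : ℂ) +
        Complex.exp (-2 * (Real.pi : ℂ) * Complex.I * t / (n + 1)) *
          ((α j * u j / (β j * v j) : ℝ) : ℂ))) :
    (∀ b ≤ n, (c b : ℂ) = (1 / (n + 1)) * ∑ t ∈ Finset.range (n + 1),
        C t * Complex.exp (2 * (Real.pi : ℂ) * Complex.I * t * b / (n + 1))) ∧
      ((∑ a : Fin n → Act, ∑ xt ∈ Finset.range (m + 1 - busyP a),
          ∑ x ∈ Finset.Nat.antidiagonalTuple k xt, p x a) = 1 →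
        B = 1 / (∑ b ∈ Finset.range (min m n + 1), ∑ xt ∈ Finset.range (m - b + 1),
          (∑ i, ρ i) ^ xt / xt.factorial * (∏ r ∈ Finset.range (xt + b), θ r) * c b)) :=
  inverse_dft_cb_and_normalizing_constant_general m k n θ α β u v ρ B p hp c hc C hC
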